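/- arXiv:0807.3410 — 5 statements merged into one kernel-verified Lean document; each statement's English description precedes it below -/
import Mathlib

section
/- If μ and λ are consistent probability measures on 𝒳_A and 𝒳_B respectively (i.e. they induce the same marginal over 𝒳_{A∩B}), then there exists a probability measure α on 𝒳_{A∪B} such that the marginal of α over A is μ, the marginal of α over B is λ, and under α, X_{A∖B} is conditionally independent of X_{B∖A} given X_{A∩B}. -/
/-!
Split `𝒳_A ≃ 𝒳_{A∩B} × 𝒳_{A∖B}`, `𝒳_B ≃ 𝒳_{A∩B} × 𝒳_{B∖A}` and
`𝒳_{A∪B} ≃ 𝒳_{A∩B} × 𝒳_{A∖B} × 𝒳_{B∖A}`. Disintegrating `μ` and `λ` over their common marginal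
`ν` on `𝒳_{A∩B}` gives kernels `κ` and `η`, and `α` is the law `ν ⊗ (κ × η)`. Its two marginals are
`ν ⊗ κ ≃ μ` and `ν ⊗ η ≃ λ`, and given the `A∩B` coordinates the other two have the product law
`κ × η`, which is conditional independence.
-/

open MeasureTheory ProbabilityTheory

namespace MeasurableEquiv

variable {ι : Type*} (X : ι → Type*) [∀ i, MeasurableSpace (X i)]

open Classical in
noncomputable def piSetEquivProd (S T U : Set ι) (hT : T ⊆ S) (hU : U ⊆ S) (hcover : S ⊆ T ∪ U)
    (hdisj : Disjoint T U) :
    (∀ i : S, X i) ≃ᵐ (∀ i : T, X i) × (∀ i : U, X i) where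
  toFun x := (fun i => x (Set.inclusion hT i), fun i => x (Set.inclusion hU i))
  invFun p i := if h : i.1 ∈ T then p.1 ⟨i, h⟩ else p.2 ⟨i, (hcover i.2).resolve_left h⟩
  left_inv x := by
    funext i
    dsimp only
    split_ifs <;> rfl
  right_inv p := by
    refine Prod.ext (funext fun i => dif_pos i.2) (funext fun i => ?_)
    exact dif_neg (Set.disjoint_right.mp hdisj i.2)
  measurable_toFun := by
    dsimp only [Equiv.coe_fn_mk]
    fun_prop
  measurable_invFun := by
    refine measurable_pi_lambda _ fun i => ?_
    dsimp only [Equiv.coe_fn_symm_mk]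
    split_ifs <;> fun_prop

end MeasurableEquiv


namespace ProbabilityTheory

variable {Z U V : Type*} {mZ : MeasurableSpace Z} {mU : MeasurableSpace U}
  {mV : MeasurableSpace V} (ν : Measure Z) [SFinite ν] (κ : Kernel Z U) (η : Kernel Z V)

lemma map_compProd_prod_eq_compProd_left [IsSFiniteKernel κ] [IsMarkovKernel η] :
    (ν ⊗ₘ (κ ×ₖ η)).map (fun p => (p.1, p.2.1)) = ν ⊗ₘ κ := by
  conv_rhs => rw [← Kernel.fst_prod κ η, Kernel.fst_eq, Measure.compProd_map measurable_fst]
  rfl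

lemma map_compProd_prod_eq_compProd_right [IsMarkovKernel κ] [IsSFiniteKernel η] :
    (ν ⊗ₘ (κ ×ₖ η)).map (fun p => (p.1, p.2.2)) = ν ⊗ₘ η := by
  conv_rhs => rw [← Kernel.snd_prod κ η, Kernel.snd_eq, Measure.compProd_map measurable_snd]
  rfl

variable {Ω : Type*} {mΩ : MeasurableSpace Ω} [StandardBorelSpace Ω] [StandardBorelSpace U]
  [Nonempty U] [StandardBorelSpace V] [Nonempty V] {α : Measure Ω} [IsFiniteMeasure α]
  {k : Ω → Z} {f : Ω → U} {g : Ω → V} {ν κ η}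

lemma condIndepFun_of_map_eq_compProd_prod (hk : Measurable k) (hf : Measurable f)
    (hg : Measurable g) [IsMarkovKernel κ] [IsMarkovKernel η]
    (hlaw : α.map (fun ω => (k ω, f ω, g ω)) = ν ⊗ₘ (κ ×ₖ η)) :
    f ⟂ᵢ[k, hk; α] g := by
  have hk_law : α.map k = ν := by
    rw [← Measure.fst_compProd ν (κ ×ₖ η), ← hlaw, Measure.fst_map_prodMk (hf.prodMk hg)]
  have hf_law : condDistrib f k α =ᵐ[ν] κ := by
    refine hk_law ▸ condDistrib_ae_eq_of_measure_eq_compProd k hf.aemeasurable ?_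
    rw [hk_law, ← map_compProd_prod_eq_compProd_left ν κ η, ← hlaw,
      Measure.map_map (by fun_prop) (by fun_prop)]
    rfl
  have hg_law : condDistrib g k α =ᵐ[ν] η := by
    refine hk_law ▸ condDistrib_ae_eq_of_measure_eq_compProd k hg.aemeasurable ?_
    rw [hk_law, ← map_compProd_prod_eq_compProd_right ν κ η, ← hlaw,
      Measure.map_map (by fun_prop) (by fun_prop)]
    rfl
  rw [condIndepFun_iff_map_prod_eq_prod_condDistrib_prod_condDistrib hf hg hk, hlaw, hk_law,
    ← Measure.compProd_eq_comp_prod]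
  refine Measure.compProd_congr ?_
  filter_upwards [hf_law, hg_law] with z hfz hgz
  rw [Kernel.prod_apply, Kernel.prod_apply, hfz, hgz]

end ProbabilityTheory

/-- Existence of the Markov combination of two consistent probability measures:
there is a probability measure on `𝒳_{A ∪ B}` with marginal `μ` over `A`, marginal `λ`
over `B`, under which `X_{A∖B}` and `X_{B∖A}` are conditionally independent given
`X_{A∩B}`. -/
theorem markov_combination_exists
    {ι : Type*} [Countable ι] (X : ι → Type*) [∀ i, MeasurableSpace (X i)]
    [∀ i, StandardBorelSpace (X i)]
    (A B : Set ι)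
    (μ : Measure (∀ i : A, X i)) (lam : Measure (∀ i : B, X i))
    [IsProbabilityMeasure μ] [IsProbabilityMeasure lam]
    (hconsist :
      μ.map (fun x (i : (A ∩ B : Set ι)) => x (Set.inclusion Set.inter_subset_left i))
        = lam.map (fun x (i : (A ∩ B : Set ι)) => x (Set.inclusion Set.inter_subset_right i))) :
    ∃ α : Measure (∀ i : (A ∪ B : Set ι), X i), ∃ _ : IsProbabilityMeasure α,
      α.map (fun x (i : A) => x (Set.inclusion Set.subset_union_left i)) = μ ∧
      α.map (fun x (i : B) => x (Set.inclusion Set.subset_union_right i)) = lam ∧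
      CondIndepFun
        (MeasurableSpace.comap
          (fun x : (∀ i : (A ∪ B : Set ι), X i) => fun i : (A ∩ B : Set ι) =>
            x (Set.inclusion (Set.inter_subset_left.trans Set.subset_union_left) i))
          inferInstance)
        (Measurable.comap_le (measurable_pi_lambda _ fun _ => measurable_pi_apply _))
        (fun x (i : (A \ B : Set ι)) =>
          x (Set.inclusion ((Set.diff_subset).trans Set.subset_union_left) i))
        (fun x (i : (B \ A : Set ι)) =>
          x (Set.inclusion ((Set.diff_subset).trans Set.subset_union_right) i))
        α := by
  let eA := MeasurableEquiv.piSetEquivProd X A (A ∩ B) (A \ B)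
    (by tauto_set) (by tauto_set) (by tauto_set) (by tauto_set)
  let eB := MeasurableEquiv.piSetEquivProd X B (A ∩ B) (B \ A)
    (by tauto_set) (by tauto_set) (by tauto_set) (by tauto_set)
  let eW := (MeasurableEquiv.piSetEquivProd X (A ∪ B) (A ∩ B) (A \ B ∪ B \ A)
      (by tauto_set) (by tauto_set) (by tauto_set) (by tauto_set)).trans
    ((MeasurableEquiv.refl _).prodCongr (MeasurableEquiv.piSetEquivProd X (A \ B ∪ B \ A)
      (A \ B) (B \ A) (by tauto_set) (by tauto_set) (by tauto_set) (by tauto_set)))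
  have := (nonempty_of_isProbabilityMeasure μ).map fun x => (eA x).2
  have := (nonempty_of_isProbabilityMeasure lam).map fun x => (eB x).2
  let ν := μ.map fun x => (eA x).1
  have : IsProbabilityMeasure ν := Measure.isProbabilityMeasure_map (by fun_prop)
  let κ := condDistrib (fun x => (eA x).2) (fun x => (eA x).1) μ
  let η := condDistrib (fun x => (eB x).2) (fun x => (eB x).1) lam
  have hμ : μ.map eA = ν ⊗ₘ κ :=
    (compProd_map_condDistrib (measurable_snd.comp eA.measurable).aemeasurable).symm
  have hlam : lam.map eB = ν ⊗ₘ η := by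
    rw [show ν = lam.map fun x => (eB x).1 from hconsist]
    exact (compProd_map_condDistrib (measurable_snd.comp eB.measurable).aemeasurable).symm
  let α := (ν ⊗ₘ (κ ×ₖ η)).map eW.symm
  have : IsProbabilityMeasure α := Measure.isProbabilityMeasure_map (by fun_prop)
  have hα : α.map eW = ν ⊗ₘ (κ ×ₖ η) := MeasurableEquiv.map_map_symm eW
  clear_value α
  refine ⟨α, inferInstance, ?_, ?_, condIndepFun_of_map_eq_compProd_prod (by fun_prop)
    (by fun_prop) (by fun_prop) hα⟩
  -- Composing with `eA` (resp. `eB`) and with `eW`, both sides restrict to the same coordinates.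
  · refine MeasurableEquiv.map_measurableEquiv_injective eA ?_
    rw [hμ, ← map_compProd_prod_eq_compProd_left ν κ η, ← hα, Measure.map_map (by fun_prop)
      (by fun_prop), Measure.map_map (by fun_prop) (by fun_prop)]
    rfl
  · refine MeasurableEquiv.map_measurableEquiv_injective eB ?_
    rw [hlam, ← map_compProd_prod_eq_compProd_right ν κ η, ← hα, Measure.map_map (by fun_prop)
      (by fun_prop), Measure.map_map (by fun_prop) (by fun_prop)]
    rfl
end

section
/- The Markov combination of probability measures is unique: if α and α′ are two probability measures on 𝒳_{A∪B} that both have marginal μ over A, marginal λ over B, and satisfy the conditional independence X_{A∖B} ⫫ X_{B∖A} | X_{A∩B}, then α = α′. -/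
/-!
Write `K`, `U`, `V` for the coordinates of `𝒳_{A∪B}` indexed by `A ∩ B`, `A ∖ B`, `B ∖ A`.
The marginals `μ` and `λ` fix the laws of `(K, U)` and `(K, V)`, hence the law of `K` and the
conditional distributions of `U` and of `V` given `K`. Conditional independence of `U` and `V`
given `K` says that the law of `(K, U, V)` is the law of `K` composed with the product of these two
conditional distributions, so it is the same under `α` and `α'`. Since `(K, U, V)` determines a
point of `𝒳_{A∪B}` and generates its σ-algebra, `α = α'`.
-/

open MeasureTheory ProbabilityTheory

section

variable {Ω β γ δ : Type*} {mΩ : MeasurableSpace Ω} [MeasurableSpace β] [MeasurableSpace γ]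
  [MeasurableSpace δ]

lemma MeasureTheory.Measure.map_comp_eq_of_map_eq {P P' : Measure Ω} {p : Ω → β} {ψ : β → γ}
    (hp : Measurable p) (hψ : Measurable ψ) (h : P.map p = P'.map p) :
    P.map (ψ ∘ p) = P'.map (ψ ∘ p) := by
  rw [← Measure.map_map hψ hp, h, Measure.map_map hψ hp]

lemma MeasureTheory.Measure.ext_of_map_eq_of_le_comap {P P' : Measure Ω} {F : Ω → β}
    (hF : Measurable F) (hgen : mΩ ≤ MeasurableSpace.comap F inferInstance)
    (h : P.map F = P'.map F) : P = P' := by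
  ext s hs
  obtain ⟨t, ht, rfl⟩ := hgen s hs
  rw [← Measure.map_apply hF ht, h, Measure.map_apply hF ht]

lemma ProbabilityTheory.condDistrib_eq_of_map_prod_eq [StandardBorelSpace γ] [Nonempty γ]
    {P P' : Measure Ω} [IsFiniteMeasure P] [IsFiniteMeasure P'] {X : Ω → β} {Y : Ω → γ}
    (h : P.map (fun ω ↦ (X ω, Y ω)) = P'.map (fun ω ↦ (X ω, Y ω))) :
    condDistrib Y X P = condDistrib Y X P' := by
  rw [condDistrib, condDistrib]
  congr 1

theorem ProbabilityTheory.map_prod₃_eq_of_condIndepFun [StandardBorelSpace Ω]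
    [StandardBorelSpace γ] [StandardBorelSpace δ]
    {P P' : Measure Ω} [IsProbabilityMeasure P] [IsProbabilityMeasure P']
    {k : Ω → β} {f : Ω → γ} {g : Ω → δ} (hk : Measurable k) (hf : Measurable f)
    (hg : Measurable g) (hP : f ⟂ᵢ[k, hk; P] g) (hP' : f ⟂ᵢ[k, hk; P'] g)
    (hkf : P.map (fun ω ↦ (k ω, f ω)) = P'.map (fun ω ↦ (k ω, f ω)))
    (hkg : P.map (fun ω ↦ (k ω, g ω)) = P'.map (fun ω ↦ (k ω, g ω))) :
    P.map (fun ω ↦ (k ω, f ω, g ω)) = P'.map (fun ω ↦ (k ω, f ω, g ω)) := by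
  have hΩ : Nonempty Ω := nonempty_of_isProbabilityMeasure P
  have : Nonempty γ := hΩ.map f
  have : Nonempty δ := hΩ.map g
  have hk_law : P.map k = P'.map k := by
    rw [← Measure.fst_map_prodMk hf, hkf, Measure.fst_map_prodMk hf]
  rw [(condIndepFun_iff_map_prod_eq_prod_condDistrib_prod_condDistrib hf hg hk).1 hP,
    (condIndepFun_iff_map_prod_eq_prod_condDistrib_prod_condDistrib hf hg hk).1 hP',
    condDistrib_eq_of_map_prod_eq hkf, condDistrib_eq_of_map_prod_eq hkg, hk_law]

end

lemma MeasurableSpace.pi_le_comap_domRestrict₂_prod₃ {ι : Type*} {X : ι → Type*}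
    [∀ i, MeasurableSpace (X i)] {S s t u : Set ι} (hs : s ⊆ S) (ht : t ⊆ S) (hu : u ⊆ S)
    (hcover : S ⊆ s ∪ t ∪ u) :
    MeasurableSpace.pi ≤ MeasurableSpace.comap
      (fun x : ∀ i : S, X i ↦
        (Set.domRestrict₂ hs x, Set.domRestrict₂ ht x, Set.domRestrict₂ hu x)) inferInstance := by
  refine iSup_le fun i ↦ measurable_iff_comap_le.1 ?_
  have hF := comap_measurable (m := inferInstance) (fun x : ∀ i : S, X i ↦
    (Set.domRestrict₂ hs x, Set.domRestrict₂ ht x, Set.domRestrict₂ hu x))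
  rcases hcover i.2 with (his | hit) | hiu
  · exact (measurable_pi_apply ⟨i, his⟩).comp (measurable_fst.comp hF)
  · exact (measurable_pi_apply ⟨i, hit⟩).comp (measurable_fst.comp (measurable_snd.comp hF))
  · exact (measurable_pi_apply ⟨i, hiu⟩).comp (measurable_snd.comp (measurable_snd.comp hF))

theorem markov_combination_unique_general
    {ι : Type*} [Countable ι] (X : ι → Type*) [∀ i, MeasurableSpace (X i)]
    [∀ i, StandardBorelSpace (X i)]
    (A B : Set ι)
    (μ : Measure (∀ i : A, X i)) (lam : Measure (∀ i : B, X i))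
    (α α' : Measure (∀ i : (A ∪ B : Set ι), X i))
    [IsProbabilityMeasure α] [IsProbabilityMeasure α']
    (hαA : α.map (fun x (i : A) => x (Set.inclusion Set.subset_union_left i)) = μ)
    (hαB : α.map (fun x (i : B) => x (Set.inclusion Set.subset_union_right i)) = lam)
    (hα'A : α'.map (fun x (i : A) => x (Set.inclusion Set.subset_union_left i)) = μ)
    (hα'B : α'.map (fun x (i : B) => x (Set.inclusion Set.subset_union_right i)) = lam)
    (hCI : CondIndepFun
        (MeasurableSpace.comap
          (fun x : (∀ i : (A ∪ B : Set ι), X i) => fun i : (A ∩ B : Set ι) =>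
            x (Set.inclusion (Set.inter_subset_left.trans Set.subset_union_left) i))
          inferInstance)
        (Measurable.comap_le (measurable_pi_lambda _ fun _ => measurable_pi_apply _))
        (fun x (i : (A \ B : Set ι)) =>
          x (Set.inclusion ((Set.diff_subset).trans Set.subset_union_left) i))
        (fun x (i : (B \ A : Set ι)) =>
          x (Set.inclusion ((Set.diff_subset).trans Set.subset_union_right) i))
        α)
    (hCI' : CondIndepFun
        (MeasurableSpace.comap
          (fun x : (∀ i : (A ∪ B : Set ι), X i) => fun i : (A ∩ B : Set ι) =>
            x (Set.inclusion (Set.inter_subset_left.trans Set.subset_union_left) i))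
          inferInstance)
        (Measurable.comap_le (measurable_pi_lambda _ fun _ => measurable_pi_apply _))
        (fun x (i : (A \ B : Set ι)) =>
          x (Set.inclusion ((Set.diff_subset).trans Set.subset_union_left) i))
        (fun x (i : (B \ A : Set ι)) =>
          x (Set.inclusion ((Set.diff_subset).trans Set.subset_union_right) i))
        α') :
    α = α' := by
  have hKU := Measure.map_comp_eq_of_map_eq
    (Set.measurable_restrict₂ (t := A ∪ B) Set.subset_union_left)
    ((Set.measurable_restrict₂ (Set.inter_subset_left (t := B))).prodMk
      (Set.measurable_restrict₂ (Set.sdiff_subset (t := B)))) (hαA.trans hα'A.symm)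
  have hKV := Measure.map_comp_eq_of_map_eq
    (Set.measurable_restrict₂ (t := A ∪ B) Set.subset_union_right)
    ((Set.measurable_restrict₂ (Set.inter_subset_right (s := A))).prodMk
      (Set.measurable_restrict₂ (Set.sdiff_subset (t := A)))) (hαB.trans hα'B.symm)
  have hK : A ∩ B ⊆ A ∪ B := Set.inter_subset_left.trans Set.subset_union_left
  have hU : A \ B ⊆ A ∪ B := Set.sdiff_subset.trans Set.subset_union_left
  have hV : B \ A ⊆ A ∪ B := Set.sdiff_subset.trans Set.subset_union_right
  refine Measure.ext_of_map_eq_of_le_comap (by fun_prop)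
    (MeasurableSpace.pi_le_comap_domRestrict₂_prod₃ hK hU hV
      (by rw [Set.inter_union_sdiff, Set.union_sdiff_self]))
    (map_prod₃_eq_of_condIndepFun (Set.measurable_restrict₂ hK) (Set.measurable_restrict₂ hU)
      (Set.measurable_restrict₂ hV) hCI hCI' hKU hKV)

/-- Uniqueness of the Markov combination: two probability measures on `𝒳_{A ∪ B}` with
marginal `μ` over `A`, marginal `λ` over `B`, and the conditional independence
`X_{A∖B} ⫫ X_{B∖A} ∣ X_{A∩B}` must coincide. -/
theorem markov_combination_unique
    {ι : Type*} [Countable ι] (X : ι → Type*) [∀ i, MeasurableSpace (X i)]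
    [∀ i, StandardBorelSpace (X i)]
    (A B : Set ι)
    (μ : Measure (∀ i : A, X i)) (lam : Measure (∀ i : B, X i))
    [IsProbabilityMeasure μ] [IsProbabilityMeasure lam]
    (hconsist :
      μ.map (fun x (i : (A ∩ B : Set ι)) => x (Set.inclusion Set.inter_subset_left i))
        = lam.map (fun x (i : (A ∩ B : Set ι)) => x (Set.inclusion Set.inter_subset_right i)))
    (α α' : Measure (∀ i : (A ∪ B : Set ι), X i))
    [IsProbabilityMeasure α] [IsProbabilityMeasure α']
    (hαA : α.map (fun x (i : A) => x (Set.inclusion Set.subset_union_left i)) = μ)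
    (hαB : α.map (fun x (i : B) => x (Set.inclusion Set.subset_union_right i)) = lam)
    (hα'A : α'.map (fun x (i : A) => x (Set.inclusion Set.subset_union_left i)) = μ)
    (hα'B : α'.map (fun x (i : B) => x (Set.inclusion Set.subset_union_right i)) = lam)
    (hCI : CondIndepFun
        (MeasurableSpace.comap
          (fun x : (∀ i : (A ∪ B : Set ι), X i) => fun i : (A ∩ B : Set ι) =>
            x (Set.inclusion (Set.inter_subset_left.trans Set.subset_union_left) i))
          inferInstance)
        (Measurable.comap_le (measurable_pi_lambda _ fun _ => measurable_pi_apply _))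
        (fun x (i : (A \ B : Set ι)) =>
          x (Set.inclusion ((Set.diff_subset).trans Set.subset_union_left) i))
        (fun x (i : (B \ A : Set ι)) =>
          x (Set.inclusion ((Set.diff_subset).trans Set.subset_union_right) i))
        α)
    (hCI' : CondIndepFun
        (MeasurableSpace.comap
          (fun x : (∀ i : (A ∪ B : Set ι), X i) => fun i : (A ∩ B : Set ι) =>
            x (Set.inclusion (Set.inter_subset_left.trans Set.subset_union_left) i))
          inferInstance)
        (Measurable.comap_le (measurable_pi_lambda _ fun _ => measurable_pi_apply _))
        (fun x (i : (A \ B : Set ι)) =>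
          x (Set.inclusion ((Set.diff_subset).trans Set.subset_union_left) i))
        (fun x (i : (B \ A : Set ι)) =>
          x (Set.inclusion ((Set.diff_subset).trans Set.subset_union_right) i))
        α') :
    α = α' :=
  markov_combination_unique_general X A B μ lam α α' hαA hαB hα'A hα'B hCI hCI'
end

section
/- Let H and H′ be probability measures on 𝒳_C × 𝒳_{B′} with H′ = (ν + n)⁻¹ (ν H + Σ_{j=1}^n δ_{x_j}) for points x_1,…,x_n and ν > 0. If H satisfies the point-conditional property (for each c with H_C({c}) > 0, the conditional of the B′-coordinate given C-coordinate equals c is a point mass) and each x_j is in the support structure compatible with H in the sense that whenever x_{jC} = x_{kC} then x_{jB′} = x_{kB′}, and whenever H_C({x_{jC}}) > 0 then x_{jB′} equals the point of concentration of H(·|x_{jC}), then H′ also satisfies the point-conditional property: for each c with H′_C({c}) > 0, the conditional distribution of the B′-coordinate under H′ given C-coordinate c is a point mass. -/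
/-!
The fibre of the posterior over `c` is a nonnegative combination of the fibre of `H` and of the
Dirac masses at the observations, and all of these are concentrated at one common point `b`:
the shared `B'`-value of the observations lying over `c` if there are any (it agrees with the
concentration point of `H` by compatibility), and otherwise the concentration point of `H`.
Concentration of a fibre at a fixed point, counting null fibres as concentrated anywhere, is
preserved by sums and scalings.
-/

open MeasureTheory ENNReal

/-- A probability measure on `𝓧C × 𝓧B'` has the point-conditional property if, at every
atom `c` of the `C`-marginal, the conditional distribution of the `B'`-coordinate is a
point mass. -/
def PointConditional {𝓧C 𝓧B' : Type*} [MeasurableSpace 𝓧C] [MeasurableSpace 𝓧B']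
    (H : Measure (𝓧C × 𝓧B')) : Prop :=
  ∀ c : 𝓧C, 0 < H.map Prod.fst {c} →
    ∃ b : 𝓧B', H ({c} ×ˢ {b}) = H.map Prod.fst {c}

section FiberConcentratedAt

variable {𝓧C 𝓧B' : Type*} [MeasurableSpace 𝓧C] [MeasurableSpace 𝓧B']

def FiberConcentratedAt (μ : Measure (𝓧C × 𝓧B')) (c : 𝓧C) (b : 𝓧B') : Prop :=
  μ ({c} ×ˢ {b}) = μ.map Prod.fst {c}

theorem fiberConcentratedAt_of_map_eq_zero {μ : Measure (𝓧C × 𝓧B')} {c : 𝓧C}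
    (h : μ.map Prod.fst {c} = 0) (b : 𝓧B') : FiberConcentratedAt μ c b := by
  have hle : μ ({c} ×ˢ {b}) ≤ μ.map Prod.fst {c} :=
    (measure_mono fun p hp => hp.1).trans (Measure.le_map_apply measurable_fst.aemeasurable _)
  exact (nonpos_iff_eq_zero.mp (hle.trans_eq h)).trans h.symm

theorem fiberConcentratedAt_of_imp {μ : Measure (𝓧C × 𝓧B')} {c : 𝓧C} {b : 𝓧B'}
    (h : 0 < μ.map Prod.fst {c} → FiberConcentratedAt μ c b) : FiberConcentratedAt μ c b := by
  rcases eq_zero_or_pos (μ.map Prod.fst {c}) with h0 | hpos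
  · exact fiberConcentratedAt_of_map_eq_zero h0 b
  · exact h hpos

theorem FiberConcentratedAt.add {μ₁ μ₂ : Measure (𝓧C × 𝓧B')} {c : 𝓧C} {b : 𝓧B'}
    (h₁ : FiberConcentratedAt μ₁ c b) (h₂ : FiberConcentratedAt μ₂ c b) :
    FiberConcentratedAt (μ₁ + μ₂) c b := by
  rw [FiberConcentratedAt, Measure.map_add _ _ measurable_fst, Measure.add_apply,
    Measure.add_apply, h₁, h₂]

theorem FiberConcentratedAt.smul {μ : Measure (𝓧C × 𝓧B')} {c : 𝓧C} {b : 𝓧B'}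
    (h : FiberConcentratedAt μ c b) (r : ℝ≥0∞) : FiberConcentratedAt (r • μ) c b := by
  rw [FiberConcentratedAt, Measure.map_smul, Measure.smul_apply, Measure.smul_apply, h]

theorem fiberConcentratedAt_zero (c : 𝓧C) (b : 𝓧B') :
    FiberConcentratedAt (0 : Measure (𝓧C × 𝓧B')) c b := by
  simp [FiberConcentratedAt]

theorem FiberConcentratedAt.finset_sum {ι : Type*} {s : Finset ι}
    {μ : ι → Measure (𝓧C × 𝓧B')} {c : 𝓧C} {b : 𝓧B'}
    (h : ∀ i ∈ s, FiberConcentratedAt (μ i) c b) : FiberConcentratedAt (∑ i ∈ s, μ i) c b :=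
  Finset.sum_induction μ (FiberConcentratedAt · c b) (fun _ _ => .add)
    (fiberConcentratedAt_zero c b) h

theorem fiberConcentratedAt_dirac [MeasurableSingletonClass 𝓧C] [MeasurableSingletonClass 𝓧B']
    {x : 𝓧C × 𝓧B'} {c : 𝓧C} {b : 𝓧B'} (h : x.1 = c → x.2 = b) :
    FiberConcentratedAt (Measure.dirac x) c b := by
  rw [FiberConcentratedAt, Measure.map_dirac' measurable_fst, Measure.dirac_apply,
    Measure.dirac_apply]
  by_cases hc : x.1 = c
  · rw [Set.indicator_of_mem (show x ∈ {c} ×ˢ {b} from ⟨hc, h hc⟩),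
      Set.indicator_of_mem (show x.1 ∈ {c} from hc), Pi.one_apply, Pi.one_apply]
  · rw [Set.indicator_of_notMem fun hx => hc hx.1,
      Set.indicator_of_notMem (show x.1 ∉ {c} from hc)]

theorem PointConditional.exists_fiberConcentratedAt [Nonempty 𝓧B'] {μ : Measure (𝓧C × 𝓧B')}
    (hμ : PointConditional μ) (c : 𝓧C) : ∃ b, FiberConcentratedAt μ c b := by
  rcases eq_zero_or_pos (μ.map Prod.fst {c}) with h0 | hpos
  · exact ⟨Classical.arbitrary _, fiberConcentratedAt_of_map_eq_zero h0 _⟩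
  · exact hμ c hpos

theorem nonempty_of_map_fst_pos {μ : Measure (𝓧C × 𝓧B')} {s : Set 𝓧C}
    (h : 0 < μ.map Prod.fst s) : Nonempty 𝓧B' := by
  by_contra hB
  rw [not_nonempty_iff] at hB
  simp [Measure.eq_zero_of_isEmpty μ] at h

end FiberConcentratedAt

theorem pointConditional_posterior_general
    {𝓧C 𝓧B' : Type*} [MeasurableSpace 𝓧C] [MeasurableSpace 𝓧B']
    [MeasurableSingletonClass 𝓧C] [MeasurableSingletonClass 𝓧B']
    (H : Measure (𝓧C × 𝓧B'))
    (ν : ℝ≥0∞)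
    (n : ℕ) (x : Fin n → 𝓧C × 𝓧B')
    (hPC : PointConditional H)
    (hxx : ∀ j k, (x j).1 = (x k).1 → (x j).2 = (x k).2)
    (hxH : ∀ j, 0 < H.map Prod.fst {(x j).1} →
      H ({(x j).1} ×ˢ {(x j).2}) = H.map Prod.fst {(x j).1}) :
    PointConditional ((ν + n)⁻¹ • (ν • H + ∑ j : Fin n, Measure.dirac (x j))) := by
  intro c hc
  have : Nonempty 𝓧B' := nonempty_of_map_fst_pos hc
  obtain ⟨b, hHb, hxb⟩ :
      ∃ b, FiberConcentratedAt H c b ∧ ∀ j, (x j).1 = c → (x j).2 = b := by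
    by_cases hobs : ∃ k, (x k).1 = c
    · obtain ⟨k, rfl⟩ := hobs
      exact ⟨(x k).2, fiberConcentratedAt_of_imp (hxH k), fun j => hxx j k⟩
    · push Not at hobs
      obtain ⟨b, hb⟩ := hPC.exists_fiberConcentratedAt c
      exact ⟨b, hb, fun j hj => absurd hj (hobs j)⟩
  exact ⟨b, ((hHb.smul ν).add
    (.finset_sum fun j _ => fiberConcentratedAt_dirac (hxb j))).smul _⟩

/-- Posterior-update stability of the point-conditional property: if `H` has point
conditionals at atoms, and the observations `x₁,…,x_n` are compatible with `H` and with
each other, then `H' = (ν + n)⁻¹ (ν H + Σ_j δ_{x_j})` also has point conditionals at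
atoms. -/
theorem pointConditional_posterior
    {𝓧C 𝓧B' : Type*} [MeasurableSpace 𝓧C] [MeasurableSpace 𝓧B']
    [MeasurableSingletonClass 𝓧C] [MeasurableSingletonClass 𝓧B']
    (H : Measure (𝓧C × 𝓧B')) [IsProbabilityMeasure H]
    (ν : ℝ≥0∞) (hν : 0 < ν) (hν' : ν ≠ ⊤)
    (n : ℕ) (x : Fin n → 𝓧C × 𝓧B')
    (hPC : PointConditional H)
    (hxx : ∀ j k, (x j).1 = (x k).1 → (x j).2 = (x k).2)
    (hxH : ∀ j, 0 < H.map Prod.fst {(x j).1} →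
      H ({(x j).1} ×ˢ {(x j).2}) = H.map Prod.fst {(x j).1}) :
    PointConditional ((ν + n)⁻¹ • (ν • H + ∑ j : Fin n, Measure.dirac (x j))) :=
  pointConditional_posterior_general H ν n x hPC hxx hxH
end

section
/- Let G be a decomposable graph with a perfect ordering of cliques C_1,…,C_n, with histories H_k = ∪_{i≤k} C_i and separators S_k = C_k ∩ H_{k−1}. Then for each k ≥ 2, the separator S_k separates the residual R_k = C_k ∖ H_{k−1} from H_{k−1} ∖ S_k in the subgraph induced by H_k. -/
private lemma walk_meets_separator {V : Type*} {G : SimpleGraph V} (A H : Set V)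
    (hedge : ∀ u v : V, G.Adj u v → u ∈ A → u ∉ H → v ∈ H → v ∉ A → False) :
    ∀ {x b : V} (q : G.Walk x b), x ∈ A → b ∉ A →
      (∀ v ∈ q.support, v ∈ A ∪ H) → ∃ v ∈ q.support, v ∈ A ∩ H := by
  intro x b q
  induction q with
  | nil => intro hx hb _; exact absurd hx hb
  | @cons x c b h q ih =>
    intro hx hb hsup
    by_cases hxH : x ∈ H
    · exact ⟨x, by simp, hx, hxH⟩
    · have hc : c ∈ A ∪ H := hsup c (by simp)
      by_cases hcA : c ∈ A
      · obtain ⟨v, hv, hv2⟩ := ih hcA hb (fun v hv => hsup v (by simp [hv]))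
        exact ⟨v, by simp [hv], hv2⟩
      · have hcH : c ∈ H := hc.resolve_left hcA
        exact absurd (hedge x c h hx hxH hcH hcA) (fun t => t)

/-- In a decomposable graph whose maximal cliques `C_1,…,C_n` are listed in a perfect
ordering, each separator `S_k = C_k ∩ H_{k−1}` separates the residual `R_k = C_k ∖ H_{k−1}`
from `H_{k−1} ∖ S_k` in the subgraph induced by the history `H_k`: every walk between them
staying inside `H_k` must meet `S_k`.  (Indices here are 0-based, so the claim is for
`k ≥ 1`.) -/
theorem separator_separates_residual_from_history
    {V : Type*} (G : SimpleGraph V) (n : ℕ) (C : ℕ → Set V)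
    (hclique : ∀ i < n, G.IsClique (C i))
    (hmax : ∀ i < n, ∀ W : Set V, G.IsClique W → C i ⊆ W → W = C i)
    (hcover : ∀ u v, G.Adj u v → ∃ i < n, u ∈ C i ∧ v ∈ C i)
    (hall : ∀ W : Set V, G.IsClique W → (∀ W' : Set V, G.IsClique W' → W ⊆ W' → W' = W) →
      ∃ i < n, C i = W)
    (hperfect : ∀ k, 1 ≤ k → k < n →
      ∃ j < k, (C k ∩ ⋃ i ∈ Finset.range k, C i) ⊆ C j) :
    ∀ k, 1 ≤ k → k < n →
      ∀ a ∈ C k \ (⋃ i ∈ Finset.range k, C i),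
      ∀ b ∈ (⋃ i ∈ Finset.range k, C i) \ (C k ∩ ⋃ i ∈ Finset.range k, C i),
      ∀ p : G.Walk a b,
        (∀ v ∈ p.support, v ∈ ⋃ i ∈ Finset.range (k + 1), C i) →
        ∃ v ∈ p.support, v ∈ C k ∩ ⋃ i ∈ Finset.range k, C i := by
  intro k hk1 hkn a ha b hb p hsup
  set H : Set V := ⋃ i ∈ Finset.range k, C i with hH
  have hmemH : ∀ v : V, v ∈ H ↔ ∃ i < k, v ∈ C i := by
    intro v; simp [hH]
  have hbC : b ∉ C k := fun hbk => hb.2 ⟨hbk, hb.1⟩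
  -- key lemma: no clique contains both a point of `C k \ H` and a point of `H \ C k`
  have key : ∀ i, i < n → ∀ u v : V, u ∈ C k → u ∉ H → v ∈ H → v ∉ C k →
      u ∈ C i → v ∈ C i → False := by
    intro i
    induction i using Nat.strong_induction_on with
    | _ i ih =>
      intro hin u v huk huH hvH hvk hui hvi
      rcases lt_trichotomy i k with hik | hik | hik
      · exact huH ((hmemH u).2 ⟨i, hik, hui⟩)
      · exact hvk (hik ▸ hvi)
      · -- i > k : use the running intersection property at i
        obtain ⟨j, hji, hsub⟩ := hperfect i (le_trans hk1 hik.le) hin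
        have huHi : u ∈ ⋃ m ∈ Finset.range i, C m := by
          simp only [Set.mem_iUnion, Finset.mem_range]
          exact ⟨k, hik, huk⟩
        have hvHi : v ∈ ⋃ m ∈ Finset.range i, C m := by
          obtain ⟨m, hmk, hvm⟩ := (hmemH v).1 hvH
          simp only [Set.mem_iUnion, Finset.mem_range]
          exact ⟨m, hmk.trans hik, hvm⟩
        exact ih j hji (hji.trans hin) u v huk huH hvH hvk
          (hsub ⟨hui, huHi⟩) (hsub ⟨hvi, hvHi⟩)
  have hedge : ∀ u v : V, G.Adj u v → u ∈ C k → u ∉ H → v ∈ H → v ∉ C k → False := by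
    intro u v huv huk huH hvH hvk
    obtain ⟨i, hin, hui, hvi⟩ := hcover u v huv
    exact key i hin u v huk huH hvH hvk hui hvi
  have hsup' : ∀ v ∈ p.support, v ∈ C k ∪ H := by
    intro v hv
    have := hsup v hv
    simp only [Set.mem_iUnion, Finset.mem_range, Nat.lt_succ_iff_lt_or_eq] at this
    rcases this with ⟨i, hi | rfl, hci⟩
    · exact Or.inr ((hmemH v).2 ⟨i, hi, hci⟩)
    · exact Or.inl hci
  exact walk_meets_separator (C k) H hedge p ha.1 hbC hsup'
end

section
/- For the discrete Markov combination α(a,c,b) = μ(a,c)·λ(c,b)/λ_C(c) (zero when λ_C(c)=0) of consistent probability mass functions μ on 𝒳_{A′}×𝒳_C and λ on 𝒳_C×𝒳_{B′}, the variables X_{A′} and X_{B′} are conditionally independent given X_C under α: for all (a,c,b) with α_C(c) > 0, α(a,b | c) = α(a | c) · α(b | c). -/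
open scoped ENNReal Classical

/-- The discrete Markov combination `α(a,c,b) = μ(a,c) λ(c,b) / λ_C(c)`
(zero when `λ_C(c) = 0`). -/
noncomputable def discreteMarkovComb {𝓧A' 𝓧C 𝓧B' : Type*}
    (μ : 𝓧A' × 𝓧C → ℝ≥0∞) (lam : 𝓧C × 𝓧B' → ℝ≥0∞) (p : 𝓧A' × 𝓧C × 𝓧B') : ℝ≥0∞ :=
  if (∑' b', lam (p.2.1, b')) = 0 then 0
  else μ (p.1, p.2.1) * lam (p.2.1, p.2.2) / ∑' b', lam (p.2.1, b')

/-- Under the discrete Markov combination `α` of consistent mass functions `μ` and `λ`,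
`X_{A′}` and `X_{B′}` are conditionally independent given `X_C`:
`α(a, b ∣ c) = α(a ∣ c) · α(b ∣ c)` whenever `α_C(c) > 0`. -/
theorem discrete_markov_combination_condIndep
    {𝓧A' 𝓧C 𝓧B' : Type*} [Countable 𝓧A'] [Countable 𝓧C] [Countable 𝓧B']
    (μ : 𝓧A' × 𝓧C → ℝ≥0∞) (lam : 𝓧C × 𝓧B' → ℝ≥0∞)
    (hμ : ∑' p : 𝓧A' × 𝓧C, μ p = 1) (hlam : ∑' p : 𝓧C × 𝓧B', lam p = 1)
    (hconsist : ∀ c, ∑' a, μ (a, c) = ∑' b, lam (c, b)) :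
    ∀ (a : 𝓧A') (c : 𝓧C) (b : 𝓧B'),
      0 < (∑' a', ∑' b', discreteMarkovComb μ lam (a', c, b')) →
      discreteMarkovComb μ lam (a, c, b)
          / (∑' a', ∑' b', discreteMarkovComb μ lam (a', c, b'))
        = ((∑' b', discreteMarkovComb μ lam (a, c, b'))
              / (∑' a', ∑' b', discreteMarkovComb μ lam (a', c, b')))
          * ((∑' a', discreteMarkovComb μ lam (a', c, b))
              / (∑' a', ∑' b', discreteMarkovComb μ lam (a', c, b'))) := by
  intro a c b hpos
  set L : ℝ≥0∞ := ∑' b', lam (c, b') with hLdef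
  have hL0 : L ≠ 0 := by
    intro h
    have : (∑' a', ∑' b', discreteMarkovComb μ lam (a', c, b')) = 0 := by
      simp [discreteMarkovComb, ← hLdef, h]
    simp [this] at hpos
  have hLtop : L ≠ ⊤ := by
    have hle : L ≤ 1 := by
      calc L ≤ ∑' c', ∑' b', lam (c', b') := ENNReal.le_tsum c
        _ = ∑' p : 𝓧C × 𝓧B', lam p := (ENNReal.tsum_prod (f := fun x y => lam (x, y))).symm
        _ = 1 := hlam
    exact ne_top_of_le_ne_top ENNReal.one_ne_top hle
  have hinv : L⁻¹ * L = 1 := ENNReal.inv_mul_cancel hL0 hLtop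
  have hα : ∀ a' b', discreteMarkovComb μ lam (a', c, b')
      = μ (a', c) * lam (c, b') * L⁻¹ := by
    intro a' b'
    simp [discreteMarkovComb, ← hLdef, hL0, div_eq_mul_inv]
  have hsumB : ∀ a', (∑' b', discreteMarkovComb μ lam (a', c, b')) = μ (a', c) := by
    intro a'
    simp only [hα]
    rw [show (fun b' => μ (a', c) * lam (c, b') * L⁻¹)
        = fun b' => μ (a', c) * L⁻¹ * lam (c, b') by funext b'; ring]
    rw [ENNReal.tsum_mul_left, ← hLdef]
    rw [mul_assoc, hinv, mul_one]
  have hsumA : (∑' a', discreteMarkovComb μ lam (a', c, b)) = lam (c, b) := by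
    simp only [hα]
    rw [show (fun a' => μ (a', c) * lam (c, b) * L⁻¹)
        = fun a' => lam (c, b) * L⁻¹ * μ (a', c) by funext a'; ring]
    rw [ENNReal.tsum_mul_left, hconsist c, ← hLdef]
    rw [mul_assoc, hinv, mul_one]
  have hsumAB : (∑' a', ∑' b', discreteMarkovComb μ lam (a', c, b')) = L := by
    simp only [hsumB]
    rw [hconsist c]
  rw [hsumAB, hsumA, hsumB a, hα a b]
  simp only [div_eq_mul_inv]
  ring
end
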